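/- Let W be a finite set of cardinality n and (B,W) a permutation group. Let (A,V) be a permutation group with A ∈ DGR, and suppose that either no permutation of V transposes the orbitals of A, or A ∈ GR, or A = I_2. If rank(A) ≥ n+1, or rank(A) = n and every orbital of A is self-paired, then the product-action wreath product A Wr B belongs to GR. -/

import Mathlib

open scoped Classical

/-- The automorphism group of a colored graph, i.e. of a coloring of the
unordered pairs of distinct elements of `V` (values of `E` on diagonal pairs
are irrelevant). -/
def graphAut {V C : Type} (E : Sym2 V → C) : Subgroup (Equiv.Perm V) where
  carrier := {σ | ∀ v w : V, v ≠ w → E s(σ v, σ w) = E s(v, w)}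
  one_mem' := by intro v w _; rfl
  mul_mem' := by
    intro a b ha hb v w hvw
    have hb' := hb v w hvw
    have ha' := ha (b v) (b w) (fun h => hvw (b.injective h))
    simpa [Equiv.Perm.mul_apply] using ha'.trans hb'
  inv_mem' := by
    intro a ha v w hvw
    have h : a⁻¹ v ≠ a⁻¹ w := fun h => hvw (by simpa using congrArg a h)
    have := ha (a⁻¹ v) (a⁻¹ w) h
    simpa using this.symm

/-- The automorphism group of a colored digraph, i.e. of a coloring of the
ordered pairs of elements of `V`. -/
def digraphAut {V C : Type} (E : V → V → C) : Subgroup (Equiv.Perm V) where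
  carrier := {σ | ∀ v w : V, E (σ v) (σ w) = E v w}
  one_mem' := by intro v w; rfl
  mul_mem' := by
    intro a b ha hb v w
    simpa [Equiv.Perm.mul_apply] using (ha (b v) (b w)).trans (hb v w)
  inv_mem' := by
    intro a ha v w
    simpa using (ha (a⁻¹ v) (a⁻¹ w)).symm

/-- The automorphism group of a colored hypergraph, i.e. of a coloring of the
nonempty subsets of `W`. -/
def hyperAut {W C : Type} (E : Set W → C) : Subgroup (Equiv.Perm W) where
  carrier := {σ | ∀ X : Set W, X.Nonempty → E (⇑σ '' X) = E X}
  one_mem' := by intro X hX; simp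
  mul_mem' := by
    intro a b ha hb X hX
    have h1 : ⇑(a * b) '' X = ⇑a '' (⇑b '' X) := by
      rw [Equiv.Perm.coe_mul, Set.image_comp]
    rw [h1, ha _ (hX.image _), hb _ hX]
  inv_mem' := by
    intro a ha X hX
    have h1 : ⇑a '' (⇑a⁻¹ '' X) = X := by
      rw [← Set.image_comp]
      have : ⇑a ∘ ⇑a⁻¹ = id := by funext x; simp
      rw [this, Set.image_id]
    have := ha (⇑a⁻¹ '' X) (hX.image _)
    rw [h1] at this
    exact this.symm

/-- `A` belongs to the class GR: it is the automorphism group of some colored graph. -/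
def IsGR {V : Type} (A : Subgroup (Equiv.Perm V)) : Prop :=
  ∃ (C : Type) (E : Sym2 V → C), graphAut E = A

/-- `A` belongs to the class DGR: it is the automorphism group of some colored digraph. -/
def IsDGR {V : Type} (A : Subgroup (Equiv.Perm V)) : Prop :=
  ∃ (C : Type) (E : V → V → C), digraphAut E = A

/-- `B` belongs to the class BGR: it is the automorphism group of some colored hypergraph. -/
def IsBGR {W : Type} (B : Subgroup (Equiv.Perm W)) : Prop :=
  ∃ (C : Type) (E : Set W → C), hyperAut E = B

/-- `(A, V)` is (permutation isomorphic to) the trivial permutation group `I₂`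
on a two-element set. -/
def IsI2 {V : Type} (A : Subgroup (Equiv.Perm V)) : Prop :=
  A = ⊥ ∧ Nat.card V = 2

/-- The permutation group `A` acts transitively on `V`. -/
def permTransitive {V : Type} (A : Subgroup (Equiv.Perm V)) : Prop :=
  ∀ v w : V, ∃ a ∈ A, a v = w

/-- The orbit of a point under a permutation group. -/
def ptOrbit {V : Type} (A : Subgroup (Equiv.Perm V)) (v : V) : Set V :=
  {u | ∃ a ∈ A, a v = u}

/-- The orbit (2*-orbital) of an unordered pair under a permutation group. -/
def pairOrbit {V : Type} (A : Subgroup (Equiv.Perm V)) (p : Sym2 V) : Set (Sym2 V) :=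
  {q | ∃ a ∈ A, Sym2.map ⇑a p = q}

/-- The orbital of an ordered pair under a permutation group. -/
def orbital {V : Type} (A : Subgroup (Equiv.Perm V)) (x : V × V) : Set (V × V) :=
  {y | ∃ a ∈ A, (a x.1, a x.2) = y}

/-- The closure `cl(A)` of a permutation group `A`: the group of all permutations of `V`
mapping each 2*-orbital of `A` onto itself. -/
def grCl {V : Type} (A : Subgroup (Equiv.Perm V)) : Subgroup (Equiv.Perm V) where
  carrier := {σ | ∀ p : Sym2 V, ¬ p.IsDiag → Sym2.map ⇑σ '' pairOrbit A p = pairOrbit A p}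
  one_mem' := by
    intro p hp
    rw [Equiv.Perm.coe_one, Sym2.map_id, Set.image_id]
  mul_mem' := by
    intro a b ha hb p hp
    rw [Equiv.Perm.coe_mul, Sym2.map_comp, Set.image_comp, hb p hp, ha p hp]
  inv_mem' := by
    intro a ha p hp
    have h1 : Sym2.map ⇑a⁻¹ ∘ Sym2.map ⇑a = id := by
      rw [← Sym2.map_comp]
      have : ⇑a⁻¹ ∘ ⇑a = id := by funext x; simp
      rw [this, Sym2.map_id]
    conv_lhs => rw [← ha p hp, ← Set.image_comp, h1, Set.image_id]

/-- The permutation `α` transposes the orbitals of `A`: it maps every orbital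
onto the orbital paired with it. -/
def TransposesOrbitals {V : Type} (A : Subgroup (Equiv.Perm V)) (α : Equiv.Perm V) : Prop :=
  ∀ x : V × V, (fun y : V × V => (α y.1, α y.2)) '' orbital A x = Prod.swap '' orbital A x

/-- The rank of a permutation group: the (cardinal) number of its orbitals. -/
def orbRank {V : Type} (A : Subgroup (Equiv.Perm V)) : Cardinal :=
  Cardinal.mk {O : Set (V × V) // ∃ x, O = orbital A x}

/-- `nsp A`: the number of pairs `{O, O'}` of distinct mutually paired
(i.e. non-self-paired) orbitals of `A`. -/
noncomputable def nsp {V : Type} (A : Subgroup (Equiv.Perm V)) : ℕ :=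
  Nat.card {O : Set (V × V) // (∃ x, O = orbital A x) ∧ Prod.swap '' O ≠ O} / 2

/-- The type of orbits of a permutation group `(A, V)` on `V`. -/
def orbitType {V : Type} (A : Subgroup (Equiv.Perm V)) : Type :=
  {O : Set V // ∃ v, O = ptOrbit A v}

/-- The imprimitive wreath product `A ≀ B` of permutation groups `(A,V)` and `(B,W)`,
acting on `V × W`. -/
def imprimWr {V W : Type} (A : Subgroup (Equiv.Perm V)) (B : Subgroup (Equiv.Perm W)) :
    Subgroup (Equiv.Perm (V × W)) where
  carrier := {γ | ∃ β ∈ B, ∃ α : W → Equiv.Perm V, (∀ w, α w ∈ A) ∧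
    ∀ p : V × W, γ p = (α p.2 p.1, β p.2)}
  one_mem' := ⟨1, B.one_mem, fun _ => 1, fun _ => A.one_mem, fun p => rfl⟩
  mul_mem' := by
    rintro γ₁ γ₂ ⟨β₁, hβ₁, α₁, hα₁, h₁⟩ ⟨β₂, hβ₂, α₂, hα₂, h₂⟩
    refine ⟨β₁ * β₂, B.mul_mem hβ₁ hβ₂, fun w => α₁ (β₂ w) * α₂ w,
      fun w => A.mul_mem (hα₁ _) (hα₂ _), fun p => ?_⟩
    have h0 : (γ₁ * γ₂) p = γ₁ (γ₂ p) := rfl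
    rw [h0, h₂ p, h₁ (α₂ p.2 p.1, β₂ p.2)]
    rfl
  inv_mem' := by
    rintro γ ⟨β, hβ, α, hα, h⟩
    refine ⟨β⁻¹, B.inv_mem hβ, fun w => (α (β⁻¹ w))⁻¹,
      fun w => A.inv_mem (hα _), fun p => ?_⟩
    have key : γ ((α (β⁻¹ p.2))⁻¹ p.1, β⁻¹ p.2) = p := by
      rw [h]
      simp
    calc γ⁻¹ p = γ⁻¹ (γ ((α (β⁻¹ p.2))⁻¹ p.1, β⁻¹ p.2)) := by rw [key]
    _ = ((α (β⁻¹ p.2))⁻¹ p.1, β⁻¹ p.2) := Equiv.symm_apply_apply γ _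

/-- The wreath product `A Wr B` of permutation groups `(A,V)` and `(B,W)` in its
product action on the set `V^W` of functions `W → V`. -/
def prodWr {V W : Type} (A : Subgroup (Equiv.Perm V)) (B : Subgroup (Equiv.Perm W)) :
    Subgroup (Equiv.Perm (W → V)) where
  carrier := {φ | ∃ β ∈ B, ∃ α : W → Equiv.Perm V, (∀ w, α w ∈ A) ∧
    ∀ (f : W → V) (w : W), φ f w = α w (f (β w))}
  one_mem' := ⟨1, B.one_mem, fun _ => 1, fun _ => A.one_mem, fun f w => rfl⟩
  mul_mem' := by
    rintro φ₁ φ₂ ⟨β₁, hβ₁, α₁, hα₁, h₁⟩ ⟨β₂, hβ₂, α₂, hα₂, h₂⟩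
    refine ⟨β₂ * β₁, B.mul_mem hβ₂ hβ₁, fun w => α₁ w * α₂ (β₁ w),
      fun w => A.mul_mem (hα₁ _) (hα₂ _), fun f w => ?_⟩
    have h0 : (φ₁ * φ₂) f = φ₁ (φ₂ f) := rfl
    rw [h0, h₁ (φ₂ f) w, h₂ f (β₁ w)]
    rfl
  inv_mem' := by
    rintro φ ⟨β, hβ, α, hα, h⟩
    refine ⟨β⁻¹, B.inv_mem hβ, fun w => (α (β⁻¹ w))⁻¹,
      fun w => A.inv_mem (hα _), fun f w => ?_⟩
    have hf : f = φ (φ⁻¹ f) := (Equiv.apply_symm_apply φ f).symm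
    conv_rhs => rw [hf]
    rw [h (φ⁻¹ f) (β⁻¹ w)]
    simp

/-- The parallel multiple `B × I_T` of a permutation group `(B, W)`, acting on `W × T`. -/
def parMul {W : Type} (B : Subgroup (Equiv.Perm W)) (T : Type) :
    Subgroup (Equiv.Perm (W × T)) where
  carrier := {γ | ∃ β ∈ B, ∀ p : W × T, γ p = (β p.1, p.2)}
  one_mem' := ⟨1, B.one_mem, fun p => rfl⟩
  mul_mem' := by
    rintro γ₁ γ₂ ⟨β₁, hβ₁, h₁⟩ ⟨β₂, hβ₂, h₂⟩
    refine ⟨β₁ * β₂, B.mul_mem hβ₁ hβ₂, fun p => ?_⟩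
    have h0 : (γ₁ * γ₂) p = γ₁ (γ₂ p) := rfl
    rw [h0, h₂, h₁]
    rfl
  inv_mem' := by
    rintro γ ⟨β, hβ, h⟩
    refine ⟨β⁻¹, B.inv_mem hβ, fun p => ?_⟩
    have key : γ (β⁻¹ p.1, p.2) = p := by rw [h]; simp
    calc γ⁻¹ p = γ⁻¹ (γ (β⁻¹ p.1, p.2)) := by rw [key]
    _ = (β⁻¹ p.1, p.2) := Equiv.symm_apply_apply γ _

/-- The composition `H2 ∘ H1` of a colored graph `H2` on `W` with a colored graph
`H1` on `V`: a colored graph on `V × W`. -/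
noncomputable def compGraph {V W C : Type} (H2 : Sym2 W → C) (H1 : Sym2 V → C) :
    Sym2 (V × W) → C :=
  Sym2.lift ⟨fun p q => if p.2 = q.2 then H1 s(p.1, q.1) else H2 s(p.2, q.2), by
    intro p q
    dsimp only
    by_cases h : p.2 = q.2
    · rw [if_pos h, if_pos h.symm, Sym2.eq_swap]
    · rw [if_neg h, if_neg (fun hh => h hh.symm), Sym2.eq_swap]⟩

/-! ### Auxiliary lemmas -/

section AuxOrbital

variable {V : Type} {A : Subgroup (Equiv.Perm V)}

lemma mem_orbital_self (A : Subgroup (Equiv.Perm V)) (x : V × V) : x ∈ orbital A x :=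
  ⟨1, A.one_mem, by simp⟩

lemma orbital_eq_of_mem {x y : V × V} (h : y ∈ orbital A x) :
    orbital A y = orbital A x := by
  obtain ⟨a, ha, rfl⟩ := h
  ext z
  constructor
  · rintro ⟨c, hc, rfl⟩
    exact ⟨c * a, A.mul_mem hc ha, rfl⟩
  · rintro ⟨c, hc, rfl⟩
    refine ⟨c * a⁻¹, A.mul_mem hc (A.inv_mem ha), ?_⟩
    simp [Equiv.Perm.mul_apply]

lemma mem_orbital_symm {x y : V × V} (h : y ∈ orbital A x) : x ∈ orbital A y := by
  rw [orbital_eq_of_mem h]; exact mem_orbital_self A x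

lemma swap_mem_orbital {x y u v : V} (h : (u, v) ∈ orbital A (x, y)) :
    (v, u) ∈ orbital A (y, x) := by
  obtain ⟨a, ha, heq⟩ := h
  rw [Prod.mk.injEq] at heq
  exact ⟨a, ha, by rw [Prod.mk.injEq]; exact ⟨heq.2, heq.1⟩⟩

lemma swap_image_orbital (A : Subgroup (Equiv.Perm V)) (x y : V) :
    Prod.swap '' orbital A (x, y) = orbital A (y, x) := by
  ext ⟨u, v⟩
  rw [Set.image_swap_eq_preimage_swap]
  constructor
  · intro h
    exact swap_mem_orbital (h : (v, u) ∈ orbital A (x, y))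
  · intro h
    exact (swap_mem_orbital h : (v, u) ∈ orbital A (x, y))

lemma diag_swap_orbital (A : Subgroup (Equiv.Perm V)) (c : V) :
    Prod.swap '' orbital A (c, c) = orbital A (c, c) := by
  rw [swap_image_orbital]

lemma orbital_bot (z : V × V) : orbital (⊥ : Subgroup (Equiv.Perm V)) z = {z} := by
  ext y
  constructor
  · rintro ⟨a, ha, rfl⟩
    rw [Subgroup.mem_bot] at ha
    subst ha
    simp
  · rintro rfl
    exact mem_orbital_self _ _

lemma pairOrbit_self {X : Type} (G : Subgroup (Equiv.Perm X)) (p : Sym2 X) :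
    p ∈ pairOrbit G p :=
  ⟨1, G.one_mem, by simp⟩

lemma pairOrbit_eq_of_mem {X : Type} {G : Subgroup (Equiv.Perm X)} {p q : Sym2 X}
    (h : q ∈ pairOrbit G p) : pairOrbit G q = pairOrbit G p := by
  obtain ⟨a, ha, rfl⟩ := h
  ext r
  constructor
  · rintro ⟨c, hc, rfl⟩
    refine ⟨c * a, G.mul_mem hc ha, ?_⟩
    rw [Equiv.Perm.coe_mul, ← Sym2.map_map]
  · rintro ⟨c, hc, rfl⟩
    refine ⟨c * a⁻¹, G.mul_mem hc (G.inv_mem ha), ?_⟩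
    rw [Equiv.Perm.coe_mul, ← Sym2.map_map, Sym2.map_map (x := p)]
    have : (⇑a⁻¹ ∘ ⇑a) = id := by funext x; simp
    rw [this, Sym2.map_id, id_eq]

end AuxOrbital
section AuxDist

open Finset

variable {V W : Type} [Fintype W]

/-- Hamming distance on `W → V`. -/
noncomputable def hdist (f g : W → V) : ℕ :=
  (Finset.univ.filter (fun w => f w ≠ g w)).card

/-- Number of disagreements away from a coordinate. -/
noncomputable def hoff (u : W) (f g : W → V) : ℕ :=
  (Finset.univ.filter (fun w => w ≠ u ∧ f w ≠ g w)).card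

lemma hdist_comm (f g : W → V) : hdist f g = hdist g f := by
  unfold hdist
  congr 1
  apply Finset.filter_congr
  intro w _
  simp [ne_comm]

lemma hdist_self (f : W → V) : hdist f f = 0 := by
  simp [hdist]

lemma hdist_split (u : W) (f g : W → V) :
    hdist f g = hoff u f g + (if f u ≠ g u then 1 else 0) := by
  unfold hdist hoff
  have hsplit : Finset.univ.filter (fun w => f w ≠ g w) =
      Finset.univ.filter (fun w => w ≠ u ∧ f w ≠ g w) ∪
      Finset.univ.filter (fun w => w = u ∧ f w ≠ g w) := by
    ext w
    by_cases hw : w = u <;> simp [hw]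
  rw [hsplit, Finset.card_union_of_disjoint]
  · congr 1
    by_cases hfu : f u ≠ g u
    · rw [if_pos hfu]
      have : Finset.univ.filter (fun w => w = u ∧ f w ≠ g w) = {u} := by
        ext w
        constructor
        · intro hw
          simp only [mem_filter] at hw
          simp [hw.2.1]
        · intro hw
          simp only [mem_singleton] at hw
          subst hw
          simp [hfu]
      rw [this, Finset.card_singleton]
    · rw [if_neg hfu]
      have : Finset.univ.filter (fun w => w = u ∧ f w ≠ g w) = ∅ := by
        ext w
        simp only [mem_filter, notMem_empty, iff_false, not_and]
        rintro _ rfl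
        exact hfu
      rw [this, Finset.card_empty]
  · rw [Finset.disjoint_filter]
    intro w _ hw
    simp [hw.1]

lemma hoff_update_right (u : W) (f g : W → V) (v : V) :
    hoff u f (Function.update g u v) = hoff u f g := by
  unfold hoff
  congr 1
  apply Finset.filter_congr
  intro w _
  by_cases hw : w = u
  · simp [hw]
  · simp [hw, Function.update_of_ne hw]

lemma hoff_update_left (u : W) (f g : W → V) (v : V) :
    hoff u (Function.update f u v) g = hoff u f g := by
  unfold hoff
  congr 1
  apply Finset.filter_congr
  intro w _
  by_cases hw : w = u
  · simp [hw]
  · simp [hw, Function.update_of_ne hw]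

lemma hdist_update_right (u : W) (f g : W → V) (v : V) :
    hdist f (Function.update g u v) = hoff u f g + (if f u ≠ v then 1 else 0) := by
  rw [hdist_split u, hoff_update_right]
  congr 2
  rw [Function.update_self]

lemma hoff_self (u : W) (f : W → V) : hoff u f f = 0 := by
  simp [hoff]

lemma hdist_update_update (u : W) (f : W → V) (v v' : V) :
    hdist (Function.update f u v) (Function.update f u v') =
      (if v ≠ v' then 1 else 0) := by
  rw [hdist_split u, hoff_update_left, hoff_update_right, hoff_self]
  simp

/-- distance is invariant under "wreath-type" permutations. -/
lemma hdist_wreath (β : Equiv.Perm W) (α : W → Equiv.Perm V) (f g : W → V) :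
    hdist (fun w => α w (f (β w))) (fun w => α w (g (β w))) = hdist f g := by
  unfold hdist
  have h1 : (Finset.univ.filter (fun w => α w (f (β w)) ≠ α w (g (β w)))) =
      (Finset.univ.filter (fun w => f (β w) ≠ g (β w))) := by
    apply Finset.filter_congr
    intro w _
    simp [(α w).injective.ne_iff]
  rw [h1]
  apply Finset.card_bij (fun w _ => β w)
  · intro a ha
    simp only [mem_filter] at ha ⊢
    exact ⟨mem_univ _, ha.2⟩
  · intro a _ b _ h
    exact β.injective h
  · intro c hc
    refine ⟨β.symm c, ?_, by simp⟩
    simp only [mem_filter] at hc ⊢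
    refine ⟨mem_univ _, ?_⟩
    simpa using hc.2

end AuxDist
section AuxHamming

open Finset Function

variable {V W : Type} [Fintype W] [Nontrivial V]

lemma hamming_structure (φ : Equiv.Perm (W → V))
    (hd : ∀ f g : W → V, hdist (φ f) (φ g) = hdist f g) :
    ∃ (b : Equiv.Perm W) (π : W → Equiv.Perm V), ∀ f w, φ f w = π w (f (b w)) := by
  classical
  have : Nonempty V := ⟨Classical.arbitrary V⟩
  set e : W → V := fun _ => Classical.arbitrary V with he
  -- distance from e to a one-point update
  have hde : ∀ (u : W) (v : V), v ≠ e u → hdist (φ e) (φ (update e u v)) = 1 := by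
    intro u v hv
    rw [hd]
    rw [hdist_update_right, hoff_self]
    simp [Ne.symm hv]
  -- choose a default changed value at each coordinate
  have hv₀ : ∀ u : W, ∃ v, v ≠ e u := fun u => exists_ne (e u)
  choose v₀ hv₀ne using hv₀
  -- the difference coordinate for the default updates
  have hm : ∀ u : W, ∃ c : W,
      Finset.univ.filter (fun w => φ e w ≠ φ (update e u (v₀ u)) w) = {c} := by
    intro u
    exact Finset.card_eq_one.mp (hde u (v₀ u) (hv₀ne u))
  choose m hmspec using hm
  -- difference coordinate is the same for every update value
  have hdiff : ∀ (u : W) (v : V), φ (update e u v) =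
      update (φ e) (m u) (φ (update e u v) (m u)) := by
    intro u v
    by_cases hv : v = e u
    · subst hv
      rw [Function.update_eq_self, Function.update_eq_self]
    · -- the difference set of (φ e, φ (update e u v)) is a singleton {c}
      obtain ⟨c, hc⟩ := Finset.card_eq_one.mp (hde u v hv)
      have hcm : c = m u := by
        by_cases hvv : v = v₀ u
        · subst hvv
          have := hc.symm.trans (hmspec u)
          exact Finset.singleton_injective this
        · -- compare the two updates
          by_contra hne
          have hd2 : hdist (φ (update e u v)) (φ (update e u (v₀ u))) = 1 := by
            rw [hd, hdist_update_update]
            simp [fun h : v = v₀ u => hvv h]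
          -- both c and m u are in the difference set
          have hcmem : φ (update e u v) c ≠ φ e c := by
            have : c ∈ Finset.univ.filter
                (fun w => φ e w ≠ φ (update e u v) w) := by
              rw [hc]; exact Finset.mem_singleton_self c
            simp only [mem_filter] at this
            exact Ne.symm this.2
          have hmmem : φ (update e u (v₀ u)) (m u) ≠ φ e (m u) := by
            have : m u ∈ Finset.univ.filter
                (fun w => φ e w ≠ φ (update e u (v₀ u)) w) := by
              rw [hmspec u]; exact Finset.mem_singleton_self _
            simp only [mem_filter] at this
            exact Ne.symm this.2
          have hagree : ∀ w, w ≠ c → φ (update e u v) w = φ e w := by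
            intro w hw
            by_contra hcon
            have : w ∈ Finset.univ.filter
                (fun w => φ e w ≠ φ (update e u v) w) := by
              simp only [mem_filter]
              exact ⟨mem_univ _, Ne.symm hcon⟩
            rw [hc] at this
            exact hw (Finset.mem_singleton.mp this)
          have hagree' : ∀ w, w ≠ m u → φ (update e u (v₀ u)) w = φ e w := by
            intro w hw
            by_contra hcon
            have : w ∈ Finset.univ.filter
                (fun w => φ e w ≠ φ (update e u (v₀ u)) w) := by
              simp only [mem_filter]
              exact ⟨mem_univ _, Ne.symm hcon⟩
            rw [hmspec u] at this
            exact hw (Finset.mem_singleton.mp this)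
          -- then the two images differ at both c and m u, contradiction with dist 1
          have hsub : ({c, m u} : Finset W) ⊆ Finset.univ.filter
              (fun w => φ (update e u v) w ≠ φ (update e u (v₀ u)) w) := by
            intro w hw
            simp only [Finset.mem_insert, Finset.mem_singleton] at hw
            simp only [mem_filter]
            refine ⟨mem_univ _, ?_⟩
            rcases hw with h | h
            · rw [h, hagree' c hne]
              exact hcmem
            · rw [h, hagree (m u) (fun hh => hne hh.symm)]
              exact fun hh => hmmem hh.symm
          have h2le : 2 ≤ hdist (φ (update e u v)) (φ (update e u (v₀ u))) := by
            have := Finset.card_le_card hsub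
            rwa [Finset.card_pair hne] at this
          omega
      rw [hcm] at hc
      funext w
      by_cases hw : w = m u
      · subst hw; rw [Function.update_self]
      · rw [Function.update_of_ne hw]
        by_contra hcon
        have : w ∈ Finset.univ.filter (fun w => φ e w ≠ φ (update e u v) w) := by
          simp only [mem_filter]
          exact ⟨mem_univ _, fun h => hcon h.symm⟩
        rw [hc] at this
        exact hw (Finset.mem_singleton.mp this)
  -- m is injective
  have hminj : Function.Injective m := by
    intro u u' huu'
    by_contra hne
    have hd2 : hdist (φ (update e u (v₀ u))) (φ (update e u' (v₀ u'))) = 2 := by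
      rw [hd]
      unfold hdist
      have : Finset.univ.filter
          (fun w => update e u (v₀ u) w ≠ update e u' (v₀ u') w) = {u, u'} := by
        ext w
        simp only [mem_filter, Finset.mem_insert, Finset.mem_singleton]
        constructor
        · intro ⟨_, hw⟩
          by_contra hcon
          push_neg at hcon
          rw [Function.update_of_ne hcon.1, Function.update_of_ne hcon.2] at hw
          exact hw rfl
        · intro hw
          refine ⟨mem_univ _, ?_⟩
          rcases hw with rfl | rfl
          · rw [Function.update_self, Function.update_of_ne hne]
            exact hv₀ne w
          · rw [Function.update_self, Function.update_of_ne (fun h => hne h.symm)]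
            exact fun h => hv₀ne w h.symm
      rw [this, Finset.card_pair hne]
    have hle1 : hdist (φ (update e u (v₀ u))) (φ (update e u' (v₀ u'))) ≤ 1 := by
      rw [hdiff u (v₀ u), hdiff u' (v₀ u'), huu']
      rw [hdist_update_update]
      split <;> omega
    omega
  have hmbij : Function.Bijective m := Finite.injective_iff_bijective.mp hminj
  set bEquiv : Equiv.Perm W := Equiv.ofBijective m hmbij with hbe
  set b : Equiv.Perm W := bEquiv.symm with hb
  have hmb : ∀ w, m (b w) = w := fun w => bEquiv.apply_symm_apply w
  -- the local permutations
  set pi : W → V → V := fun w v => φ (update e (b w) v) w with hpi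
  have himg : ∀ (w : W) (v : V), φ (update e (b w) v) = update (φ e) w (pi w v) := by
    intro w v
    have := hdiff (b w) v
    rwa [hmb w] at this
  -- master formula
  have hmaster : ∀ (f : W → V) (w : W), φ f w = pi w (f (b w)) := by
    intro f w
    set u : W := b w with hu
    have key : ∀ v : V, hoff u f e + (if f u ≠ v then 1 else 0) =
        hoff w (φ f) (φ e) + (if φ f w ≠ pi w v then 1 else 0) := by
      intro v
      have h1 : hdist f (update e u v) = hoff u f e + (if f u ≠ v then 1 else 0) :=
        hdist_update_right u f e v
      have h2 : hdist (φ f) (φ (update e u v)) =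
          hoff w (φ f) (φ e) + (if φ f w ≠ pi w v then 1 else 0) := by
        rw [himg w v, hdist_update_right]
      rw [← h2, hd, h1]
    obtain ⟨v', hv'⟩ := exists_ne (f u)
    have k1 := key (f u)
    have k2 := key v'
    rw [if_neg (by simp)] at k1
    rw [if_pos (Ne.symm hv')] at k2
    by_contra hcon
    rw [if_pos hcon] at k1
    have : (if φ f w ≠ pi w v' then 1 else 0) ≤ 1 := by split <;> omega
    omega
  -- pi w is bijective
  have hpibij : ∀ w, Function.Bijective (pi w) := by
    intro w
    constructor
    · intro v v' hvv'
      have : φ (update e (b w) v) = φ (update e (b w) v') := by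
        rw [himg, himg, hvv']
      have h2 := φ.injective this
      have := congrFun h2 (b w)
      rwa [Function.update_self, Function.update_self] at this
    · intro z
      set f : W → V := φ.symm (update (φ e) w z) with hf
      refine ⟨f (b w), ?_⟩
      have := hmaster f w
      rw [← this, hf, Equiv.apply_symm_apply, Function.update_self]
  refine ⟨b, fun w => Equiv.ofBijective (pi w) (hpibij w), ?_⟩
  intro f w
  exact hmaster f w

end AuxHamming
section AuxK

open Function

/-- The key property extracted from preserving the orbit coloring. -/
def KProp {V W : Type} (G : Subgroup (Equiv.Perm (W → V))) (φ : Equiv.Perm (W → V)) : Prop :=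
  ∀ f g : W → V, f ≠ g → ∃ γ ∈ G, (γ f = φ f ∧ γ g = φ g) ∨ (γ f = φ g ∧ γ g = φ f)

variable {V W : Type} [Fintype W]

lemma prodWr_dist {A : Subgroup (Equiv.Perm V)} {B : Subgroup (Equiv.Perm W)}
    (γ : Equiv.Perm (W → V)) (hγ : γ ∈ prodWr A B) (f g : W → V) :
    hdist (γ f) (γ g) = hdist f g := by
  obtain ⟨β, hβ, α, hα, hform⟩ := hγ
  rw [show γ f = fun w => α w (f (β w)) from funext (hform f),
      show γ g = fun w => α w (g (β w)) from funext (hform g)]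
  exact hdist_wreath β α f g

lemma K_dist {A : Subgroup (Equiv.Perm V)} {B : Subgroup (Equiv.Perm W)}
    {φ : Equiv.Perm (W → V)} (hK : KProp (prodWr A B) φ) :
    ∀ f g : W → V, hdist (φ f) (φ g) = hdist f g := by
  intro f g
  by_cases hfg : f = g
  · subst hfg
    rw [hdist_self, hdist_self]
  obtain ⟨γ, hγ, hcase⟩ := hK f g hfg
  rcases hcase with ⟨h1, h2⟩ | ⟨h1, h2⟩
  · rw [← h1, ← h2, prodWr_dist γ hγ]
  · rw [← h2, ← h1, prodWr_dist γ hγ, hdist_comm]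

end AuxK

section AuxTrans

variable {V : Type}

lemma minus_transposes (A : Subgroup (Equiv.Perm V)) (π : Equiv.Perm V)
    (hm : ∀ x y : V, (π x, π y) ∈ orbital A (y, x)) : TransposesOrbitals A π := by
  have hminv : ∀ x y : V, (π⁻¹ x, π⁻¹ y) ∈ orbital A (y, x) := by
    intro x y
    have h1 := hm (π⁻¹ x) (π⁻¹ y)
    rw [show π (π⁻¹ x) = x from Equiv.apply_symm_apply π x,
      show π (π⁻¹ y) = y from Equiv.apply_symm_apply π y] at h1
    exact swap_mem_orbital (mem_orbital_symm h1)
  intro z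
  rw [show Prod.swap '' orbital A z = orbital A (z.2, z.1) from
    swap_image_orbital A z.1 z.2]
  ext ⟨u, v⟩
  constructor
  · rintro ⟨⟨p, q⟩, hpq, heq⟩
    simp only [Prod.mk.injEq] at heq
    obtain ⟨h1, h2⟩ := heq
    subst h1; subst h2
    have hpiq := hm p q
    have hqp : (q, p) ∈ orbital A (z.2, z.1) := swap_mem_orbital hpq
    rwa [orbital_eq_of_mem hqp] at hpiq
  · intro h
    refine ⟨(π⁻¹ u, π⁻¹ v), ?_, ?_⟩
    · have h1 := hminv u v
      have h2 : (v, u) ∈ orbital A (z.1, z.2) := swap_mem_orbital h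
      rwa [orbital_eq_of_mem h2] at h1
    · simp

lemma gr_minus_mem {A : Subgroup (Equiv.Perm V)} (hGR : IsGR A)
    (π : Equiv.Perm V) (hm : ∀ x y : V, (π x, π y) ∈ orbital A (y, x)) : π ∈ A := by
  obtain ⟨C₁, E₁, hE₁⟩ := hGR
  rw [← hE₁]
  have key : ∀ v w : V, v ≠ w → E₁ s(π v, π w) = E₁ s(v, w) := by
    intro v w hvw
    obtain ⟨a, haA, heq⟩ := hm v w
    rw [Prod.mk.injEq] at heq
    rw [← hE₁] at haA
    have ha' : E₁ s(a w, a v) = E₁ s(w, v) := haA w v (Ne.symm hvw)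
    rw [← heq.1, ← heq.2, ha', Sym2.eq_swap]
  exact key

end AuxTrans
section AuxSel

variable {V W : Type} [Fintype W] [Nontrivial V] [Nontrivial W]

lemma selection (n : ℕ) (hn : Fintype.card W = n) (A : Subgroup (Equiv.Perm V))
    (hrank : (n : Cardinal) + 1 ≤ orbRank A ∨
      (orbRank A = (n : Cardinal) ∧
        ∀ x : V × V, Prod.swap '' orbital A x = orbital A x)) :
    ∃ xs ys : W → V,
      (∀ u u' : W, orbital A (xs u, ys u) = orbital A (xs u', ys u') → u = u') ∧
      (∃ u : W, xs u ≠ ys u) ∧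
      ((∀ z : V × V, Prod.swap '' orbital A z = orbital A z) ∨
        (∃ u₁ : W, ∀ u : W,
          orbital A (xs u, ys u) ≠ orbital A (ys u₁, xs u₁))) := by
  classical
  set T := {O : Set (V × V) // ∃ x : V × V, O = orbital A x} with hT
  have horbT : orbRank A = Cardinal.mk T := rfl
  by_cases hsp : ∀ z : V × V, Prod.swap '' orbital A z = orbital A z
  · -- all orbitals self-paired
    have hle : Cardinal.mk W ≤ Cardinal.mk T := by
      rw [Cardinal.mk_fintype, hn]
      rcases hrank with h | ⟨h, _⟩
      · exact le_trans (self_le_add_right _ 1) (horbT ▸ h)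
      · exact le_of_eq (horbT ▸ h).symm
    obtain ⟨j⟩ := (Cardinal.le_def W T).mp hle
    obtain ⟨v, v', hvv'⟩ := exists_pair_ne V
    set Q : T := ⟨orbital A (v, v'), ⟨(v, v'), rfl⟩⟩ with hQdef
    have hexists : ∃ jj : W → T, Function.Injective jj ∧ ∃ ud : W, jj ud = Q := by
      by_cases hQ : ∃ u₀, j u₀ = Q
      · exact ⟨j, j.injective, hQ⟩
      · push_neg at hQ
        set u₀ := Classical.arbitrary W with hu₀
        refine ⟨fun u => if u = u₀ then Q else j u, ?_, ⟨u₀, by simp⟩⟩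
        intro a c hac
        dsimp only at hac
        by_cases ha : a = u₀ <;> by_cases hc : c = u₀
        · rw [ha, hc]
        · rw [if_pos ha, if_neg hc] at hac
          exact absurd hac.symm (hQ c)
        · rw [if_neg ha, if_pos hc] at hac
          exact absurd hac (hQ a)
        · rw [if_neg ha, if_neg hc] at hac
          exact j.injective hac
    obtain ⟨jj, hjji, ud, hud⟩ := hexists
    choose zs hz using fun u : W => (jj u).2
    refine ⟨fun u => (zs u).1, fun u => (zs u).2, ?_, ?_, Or.inl hsp⟩
    · intro u u' hOrb
      apply hjji
      apply Subtype.ext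
      rw [hz u, hz u']
      exact hOrb
    · refine ⟨ud, fun heq => ?_⟩
      dsimp only at heq
      have hmem : (v, v') ∈ (jj ud).1 := by
        rw [hud]
        exact mem_orbital_self A (v, v')
      rw [hz ud] at hmem
      obtain ⟨a, _, hpair⟩ := hmem
      rw [Prod.mk.injEq] at hpair
      apply hvv'
      rw [← hpair.1, ← hpair.2, heq]
  · -- some orbital is not self-paired
    push_neg at hsp
    obtain ⟨z₀, hz₀⟩ := hsp
    have h1 : (n : Cardinal) + 1 ≤ Cardinal.mk T := by
      rcases hrank with h | ⟨_, hallsp⟩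
      · exact horbT ▸ h
      · exact absurd (hallsp z₀) hz₀
    have hembFin : Nonempty (Fin (n + 1) ↪ T) := by
      rw [← Cardinal.le_def]
      have : Cardinal.mk (Fin (n + 1)) = (n : Cardinal) + 1 := by
        rw [Cardinal.mk_fin]
        exact_mod_cast rfl
      rw [this]
      exact h1
    obtain ⟨F⟩ := hembFin
    set tO : T := ⟨orbital A z₀, ⟨z₀, rfl⟩⟩ with htOdef
    set tO' : T := ⟨orbital A (z₀.2, z₀.1), ⟨(z₀.2, z₀.1), rfl⟩⟩ with htO'def
    have hOO' : tO ≠ tO' := by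
      intro h
      apply hz₀
      have h2 : orbital A z₀ = orbital A (z₀.2, z₀.1) := congrArg Subtype.val h
      rw [show Prod.swap '' orbital A z₀ = orbital A (z₀.2, z₀.1) from
        swap_image_orbital A z₀.1 z₀.2, ← h2]
    set S : Finset T := Finset.univ.map F with hSdef
    have hScard : S.card = n + 1 := by
      rw [hSdef, Finset.card_map, Finset.card_univ, Fintype.card_fin]
    have hn2 : 2 ≤ n := by
      rw [← hn]
      exact Fintype.one_lt_card
    set R₀ : Finset T := S.erase tO' with hR₀def
    have hR₀ : n ≤ R₀.card := by
      show n ≤ (S.erase tO').card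
      have := Finset.pred_card_le_card_erase (s := S) (a := tO')
      omega
    set R₀' : Finset T := R₀.erase tO with hR₀'def
    have hR₀' : n - 1 ≤ R₀'.card := by
      show n - 1 ≤ (R₀.erase tO).card
      have := Finset.pred_card_le_card_erase (s := R₀) (a := tO)
      omega
    obtain ⟨R₂, hR₂sub, hR₂card⟩ := Finset.exists_subset_card_eq hR₀'
    have htOR₂ : tO ∉ R₂ := fun h => (Finset.mem_erase.mp (hR₂sub h)).1 rfl
    set R₁ : Finset T := insert tO R₂ with hR₁def
    have hR₁card : R₁.card = n := by
      rw [hR₁def, Finset.card_insert_of_notMem htOR₂, hR₂card]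
      omega
    have htO'R₁ : tO' ∉ R₁ := by
      intro h
      rcases Finset.mem_insert.mp h with h | h
      · exact hOO' h.symm
      · exact (Finset.mem_erase.mp (Finset.mem_erase.mp (hR₂sub h)).2).1 rfl
    have hcardEq : Fintype.card W = Fintype.card {x // x ∈ R₁} := by
      rw [hn, Fintype.card_coe, hR₁card]
    set jeq : W ≃ {x // x ∈ R₁} := Fintype.equivOfCardEq hcardEq with hjeqdef
    set jj : W → T := fun u => (jeq u : T) with hjjdef
    have hjji : Function.Injective jj := by
      intro a c hac
      exact jeq.injective (Subtype.ext hac)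
    have htOmem : tO ∈ R₁ := Finset.mem_insert_self _ _
    set u₁ : W := jeq.symm ⟨tO, htOmem⟩ with hu₁def
    have hju₁ : jj u₁ = tO := by
      rw [hjjdef, hu₁def]
      simp
    choose zs hz using fun u : W => (jj u).2
    have horb : orbital A (zs u₁) = orbital A z₀ := by
      rw [← hz u₁, hju₁]
    refine ⟨fun u => (zs u).1, fun u => (zs u).2, ?_, ?_, Or.inr ⟨u₁, ?_⟩⟩
    · intro u u' hOrb
      apply hjji
      apply Subtype.ext
      rw [hz u, hz u']
      exact hOrb
    · refine ⟨u₁, fun heq => ?_⟩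
      dsimp only at heq
      apply hz₀
      have h3 : ((zs u₁).1, (zs u₁).1) = zs u₁ := by
        nth_rewrite 2 [heq]
        exact Prod.mk.eta
      have h2 : orbital A z₀ = orbital A ((zs u₁).1, (zs u₁).1) := by
        rw [h3, ← horb]
      rw [h2]
      exact diag_swap_orbital A _
    · intro u hbad
      dsimp only at hbad
      have hm0 : zs u₁ ∈ orbital A z₀ := horb ▸ mem_orbital_self A (zs u₁)
      have hm1 : ((zs u₁).2, (zs u₁).1) ∈ orbital A (z₀.2, z₀.1) :=
        swap_mem_orbital hm0
      have h1 : orbital A ((zs u₁).2, (zs u₁).1) = orbital A (z₀.2, z₀.1) :=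
        orbital_eq_of_mem hm1
      have h2 : (jj u).1 = orbital A (z₀.2, z₀.1) := by
        rw [hz u]
        exact hbad.trans h1
      have h3 : jj u = tO' := Subtype.ext h2
      apply htO'R₁
      rw [← h3]
      exact (jeq u).2
end AuxSel
section AuxKey

open Function

variable {V W : Type} [Fintype W] [Nontrivial V] [Nontrivial W]

lemma key_membership (n : ℕ) (hn : Fintype.card W = n)
    (A : Subgroup (Equiv.Perm V)) (hA : IsDGR A)
    (hA' : (¬ ∃ α : Equiv.Perm V, TransposesOrbitals A α) ∨ IsGR A ∨ IsI2 A)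
    (B : Subgroup (Equiv.Perm W))
    (hrank : (n : Cardinal) + 1 ≤ orbRank A ∨
      (orbRank A = (n : Cardinal) ∧
        ∀ x : V × V, Prod.swap '' orbital A x = orbital A x))
    (φ : Equiv.Perm (W → V)) (hK : KProp (prodWr A B) φ) :
    φ ∈ prodWr A B := by
  classical
  obtain ⟨b, Pi, hform⟩ := hamming_structure φ (K_dist hK)
  -- Diagonal plus: each Pi w maps points within their A-orbit.
  have DP : ∀ (w₀ : W) (x : V), ∃ a ∈ A, Pi w₀ x = a x := by
    intro w₀ x
    obtain ⟨u₁, hu₁⟩ := exists_ne (b w₀)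
    obtain ⟨x'', hx''⟩ := exists_ne x
    have hfg : (fun _ : W => x) ≠ Function.update (fun _ : W => x) u₁ x'' := by
      intro h
      apply hx''
      have := congrFun h u₁
      rw [Function.update_self] at this
      exact this.symm
    obtain ⟨γ, hγ, hcase⟩ := hK _ _ hfg
    obtain ⟨β, hβ, α, hα, hγform⟩ := hγ
    rcases hcase with ⟨h1, h2⟩ | ⟨h1, h2⟩
    · have e1 := congrFun h1 w₀
      rw [hγform, hform] at e1
      exact ⟨α w₀, hα w₀, e1.symm⟩
    · have e1 := congrFun h1 w₀
      rw [hγform, hform] at e1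
      -- e1 : α w₀ x = Pi w₀ (update (fun _ => x) u₁ x'' (b w₀))
      rw [Function.update_of_ne (Ne.symm hu₁)] at e1
      exact ⟨α w₀, hα w₀, e1.symm⟩
  -- Dichotomy from constant probes.
  have CD : ∀ x y : V, x ≠ y →
      (∀ w, (Pi w x, Pi w y) ∈ orbital A (x, y)) ∨
      (∀ w, (Pi w x, Pi w y) ∈ orbital A (y, x)) := by
    intro x y hxy
    have hfg : (fun _ : W => x) ≠ (fun _ : W => y) :=
      fun h => hxy (congrFun h (Classical.arbitrary W))
    obtain ⟨γ, hγ, hcase⟩ := hK _ _ hfg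
    obtain ⟨β, hβ, α, hα, hγform⟩ := hγ
    rcases hcase with ⟨h1, h2⟩ | ⟨h1, h2⟩
    · left
      intro w
      have e1 := congrFun h1 w; rw [hγform, hform] at e1
      have e2 := congrFun h2 w; rw [hγform, hform] at e2
      exact ⟨α w, hα w, by rw [Prod.mk.injEq]; exact ⟨e1, e2⟩⟩
    · right
      intro w
      have e1 := congrFun h1 w; rw [hγform, hform] at e1
      have e2 := congrFun h2 w; rw [hγform, hform] at e2
      exact ⟨α w, hα w, by rw [Prod.mk.injEq]; exact ⟨e2, e1⟩⟩
  -- Global plus.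
  have PLUS : ∀ (w : W) (x y : V), (Pi w x, Pi w y) ∈ orbital A (x, y) := by
    by_contra hcon
    push_neg at hcon
    obtain ⟨w₁, x₀, y₀, hstrict⟩ := hcon
    have hx₀y₀ : x₀ ≠ y₀ := by
      rintro rfl
      obtain ⟨a, haA, hax⟩ := DP w₁ x₀
      exact hstrict ⟨a, haA, by rw [Prod.mk.injEq]; exact ⟨hax.symm, hax.symm⟩⟩
    have minus₀ : ∀ w, (Pi w x₀, Pi w y₀) ∈ orbital A (y₀, x₀) := by
      rcases CD x₀ y₀ hx₀y₀ with h | h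
      · exact absurd (h w₁) hstrict
      · exact h
    have HO : orbital A (y₀, x₀) ≠ orbital A (x₀, y₀) := by
      intro h
      exact hstrict (h ▸ minus₀ w₁)
    have MINUS : ∀ (w : W) (x y : V), (Pi w x, Pi w y) ∈ orbital A (y, x) := by
      intro w x y
      by_cases hxy : x = y
      · subst hxy
        obtain ⟨a, haA, hax⟩ := DP w x
        exact ⟨a, haA, by rw [Prod.mk.injEq]; exact ⟨hax.symm, hax.symm⟩⟩
      by_contra hnm
      have plusxy : ∀ w', (Pi w' x, Pi w' y) ∈ orbital A (x, y) := by
        rcases CD x y hxy with h | h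
        · exact h
        · exact absurd (h w) hnm
      have HO2 : orbital A (x, y) ≠ orbital A (y, x) := by
        intro h
        exact hnm (h ▸ plusxy w)
      set u₁ : W := Classical.arbitrary W with hu₁def
      have hfg : Function.update (fun _ : W => x) u₁ x₀ ≠
          Function.update (fun _ : W => y) u₁ y₀ := by
        intro h
        have := congrFun h u₁
        rw [Function.update_self, Function.update_self] at this
        exact hx₀y₀ this
      obtain ⟨γ, hγ, hcase⟩ := hK _ _ hfg
      obtain ⟨β, hβ, α, hα, hγform⟩ := hγ
      set wb : W := b.symm u₁ with hwbdef
      have hbwb : b wb = u₁ := b.apply_symm_apply u₁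
      have hfb : Function.update (fun _ : W => x) u₁ x₀ (b wb) = x₀ := by
        rw [hbwb, Function.update_self]
      have hgb : Function.update (fun _ : W => y) u₁ y₀ (b wb) = y₀ := by
        rw [hbwb, Function.update_self]
      rcases hcase with ⟨h1, h2⟩ | ⟨h1, h2⟩
      · -- non-crossed realization: impossible
        have e1 := congrFun h1 wb; rw [hγform, hform] at e1
        have e2 := congrFun h2 wb; rw [hγform, hform] at e2
        rw [hfb] at e1
        rw [hgb] at e2
        have hval : (Pi wb x₀, Pi wb y₀) ∈ orbital A
            (Function.update (fun _ : W => x) u₁ x₀ (β wb),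
             Function.update (fun _ : W => y) u₁ y₀ (β wb)) :=
          ⟨α wb, hα wb, by rw [Prod.mk.injEq]; exact ⟨e1, e2⟩⟩
        have hEq := (orbital_eq_of_mem hval).symm.trans (orbital_eq_of_mem (minus₀ wb))
        by_cases hb1 : β wb = u₁
        · rw [hb1, Function.update_self, Function.update_self] at hEq
          exact HO hEq.symm
        · rw [Function.update_of_ne hb1, Function.update_of_ne hb1] at hEq
          set w' : W := β.symm u₁ with hw'def
          have hβw' : β w' = u₁ := β.apply_symm_apply u₁
          have hww : w' ≠ wb := by
            intro h
            rw [h] at hβw'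
            exact hb1 hβw'
          have hbww : b w' ≠ u₁ := by
            intro h
            apply hww
            rw [hwbdef, ← h, b.symm_apply_apply]
          have e1' := congrFun h1 w'; rw [hγform, hform] at e1'
          have e2' := congrFun h2 w'; rw [hγform, hform] at e2'
          rw [Function.update_of_ne hbww, hβw', Function.update_self] at e1'
          rw [Function.update_of_ne hbww, hβw', Function.update_self] at e2'
          have hval2 : (Pi w' x, Pi w' y) ∈ orbital A (x₀, y₀) :=
            ⟨α w', hα w', by rw [Prod.mk.injEq]; exact ⟨e1', e2'⟩⟩
          have hEq2 := (orbital_eq_of_mem hval2).symm.trans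
            (orbital_eq_of_mem (plusxy w'))
          exact HO (hEq.symm.trans hEq2.symm)
      · -- crossed realization: impossible
        obtain ⟨w₂, hw₂⟩ := exists_ne wb
        have hbw₂ : b w₂ ≠ u₁ := by
          intro h
          apply hw₂
          rw [hwbdef, ← h, b.symm_apply_apply]
        have e1 := congrFun h1 w₂; rw [hγform, hform] at e1
        have e2 := congrFun h2 w₂; rw [hγform, hform] at e2
        rw [Function.update_of_ne hbw₂] at e1 e2
        have hval : (Pi w₂ y, Pi w₂ x) ∈ orbital A
            (Function.update (fun _ : W => x) u₁ x₀ (β w₂),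
             Function.update (fun _ : W => y) u₁ y₀ (β w₂)) :=
          ⟨α w₂, hα w₂, by rw [Prod.mk.injEq]; exact ⟨e1, e2⟩⟩
        have hswap : (Pi w₂ y, Pi w₂ x) ∈ orbital A (y, x) :=
          swap_mem_orbital (plusxy w₂)
        have hEqA := (orbital_eq_of_mem hval).symm.trans (orbital_eq_of_mem hswap)
        by_cases hb2 : β w₂ = u₁
        · rw [hb2, Function.update_self, Function.update_self] at hEqA
          have e3 := congrFun h1 wb; rw [hγform, hform] at e3
          have e4 := congrFun h2 wb; rw [hγform, hform] at e4
          rw [hgb] at e3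
          rw [hfb] at e4
          have hval3 : (Pi wb y₀, Pi wb x₀) ∈ orbital A
              (Function.update (fun _ : W => x) u₁ x₀ (β wb),
               Function.update (fun _ : W => y) u₁ y₀ (β wb)) :=
            ⟨α wb, hα wb, by rw [Prod.mk.injEq]; exact ⟨e3, e4⟩⟩
          have hsw3 : (Pi wb y₀, Pi wb x₀) ∈ orbital A (x₀, y₀) :=
            swap_mem_orbital (minus₀ wb)
          have hEqB := (orbital_eq_of_mem hval3).symm.trans (orbital_eq_of_mem hsw3)
          have hb3 : β wb ≠ u₁ := by
            intro h
            exact hw₂ (β.injective (hb2.trans h.symm))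
          rw [Function.update_of_ne hb3, Function.update_of_ne hb3] at hEqB
          exact HO2 (hEqB.trans hEqA)
        · rw [Function.update_of_ne hb2, Function.update_of_ne hb2] at hEqA
          exact HO2 hEqA
    -- now eliminate the minus branch via hA'
    rcases hA' with hnt | hGR | hI2
    · exact hnt ⟨Pi (Classical.arbitrary W),
        minus_transposes A _ (MINUS (Classical.arbitrary W))⟩
    · have hmem : Pi w₁ ∈ A := gr_minus_mem hGR (Pi w₁) (MINUS w₁)
      exact hstrict ⟨Pi w₁, hmem, rfl⟩
    · obtain ⟨hbot, _⟩ := hI2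
      obtain ⟨a, haA, hax⟩ := DP w₁ x₀
      rw [hbot, Subgroup.mem_bot] at haA
      subst haA
      have hax' : Pi w₁ x₀ = x₀ := by rw [hax]; rfl
      have h1 := minus₀ w₁
      rw [hbot, orbital_bot] at h1
      have h2 : Pi w₁ x₀ = y₀ := congrArg Prod.fst (Set.mem_singleton_iff.mp h1)
      exact hx₀y₀ (hax'.symm.trans h2)
  -- each Pi w belongs to A, via the digraph
  obtain ⟨CD₂, D, hD⟩ := hA
  have HA : ∀ w, Pi w ∈ A := by
    intro w
    rw [← hD]
    have key : ∀ x y : V, D (Pi w x) (Pi w y) = D x y := by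
      intro x y
      obtain ⟨a, haA, heq⟩ := PLUS w x y
      rw [Prod.mk.injEq] at heq
      rw [← hD] at haA
      rw [← heq.1, ← heq.2]
      exact haA x y
    exact key
  -- coordinatewise part of φ
  set γ₁ : Equiv.Perm (W → V) := Equiv.piCongrRight (fun w => Pi w) with hγ₁def
  have hγ₁mem : γ₁ ∈ prodWr A B :=
    ⟨1, B.one_mem, fun w => Pi w, HA, fun f w => rfl⟩
  set ψ : Equiv.Perm (W → V) := γ₁⁻¹ * φ with hψdef
  have hψapp : ∀ (f : W → V) (w : W), ψ f w = f (b w) := by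
    intro f w
    have h1 : φ f = γ₁ (fun w' => f (b w')) := by
      funext w'
      exact hform f w'
    calc ψ f w = γ₁⁻¹ (φ f) w := rfl
    _ = γ₁⁻¹ (γ₁ (fun w' => f (b w'))) w := by rw [h1]
    _ = f (b w) := by rw [show γ₁⁻¹ (γ₁ fun w' => f (b w')) = fun w' => f (b w') from
        Equiv.symm_apply_apply γ₁ _]
  have hKψ : KProp (prodWr A B) ψ := by
    intro f g hfg
    obtain ⟨γ, hγ, hcase⟩ := hK f g hfg
    refine ⟨γ₁⁻¹ * γ, Subgroup.mul_mem _ (Subgroup.inv_mem _ hγ₁mem) hγ, ?_⟩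
    rcases hcase with ⟨h1, h2⟩ | ⟨h1, h2⟩
    · refine Or.inl ⟨?_, ?_⟩
      · show γ₁⁻¹ (γ f) = γ₁⁻¹ (φ f)
        rw [h1]
      · show γ₁⁻¹ (γ g) = γ₁⁻¹ (φ g)
        rw [h2]
    · refine Or.inr ⟨?_, ?_⟩
      · show γ₁⁻¹ (γ f) = γ₁⁻¹ (φ g)
        rw [h1]
      · show γ₁⁻¹ (γ g) = γ₁⁻¹ (φ f)
        rw [h2]
  -- the base pair forces the coordinate permutation into B
  obtain ⟨xs, ys, hinj, ⟨uh, hne⟩, hcross⟩ := selection n hn A hrank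
  have hxsys : xs ≠ ys := fun h => hne (congrFun h uh)
  obtain ⟨γ, hγ, hcase⟩ := hKψ xs ys hxsys
  obtain ⟨β, hβ, α, hα, hγform⟩ := hγ
  have hfinish : (∀ w, β w = b w) → φ ∈ prodWr A B := by
    intro hbeq
    have hbb : (b : Equiv.Perm W) ∈ B := by
      have : β = b := Equiv.ext hbeq
      rw [← this]
      exact hβ
    exact ⟨b, hbb, fun w => Pi w, HA, hform⟩
  rcases hcase with ⟨h1, h2⟩ | ⟨h1, h2⟩
  · apply hfinish
    intro w
    apply hinj
    have e1 := congrFun h1 w; rw [hγform, hψapp] at e1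
    have e2 := congrFun h2 w; rw [hγform, hψapp] at e2
    have hmem : (xs (b w), ys (b w)) ∈ orbital A (xs (β w), ys (β w)) :=
      ⟨α w, hα w, by rw [Prod.mk.injEq]; exact ⟨e1, e2⟩⟩
    exact (orbital_eq_of_mem hmem).symm
  · have hkey : ∀ w, orbital A (ys (b w), xs (b w)) =
        orbital A (xs (β w), ys (β w)) := by
      intro w
      have e1 := congrFun h1 w; rw [hγform, hψapp] at e1
      have e2 := congrFun h2 w; rw [hγform, hψapp] at e2
      have hmem : (ys (b w), xs (b w)) ∈ orbital A (xs (β w), ys (β w)) :=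
        ⟨α w, hα w, by rw [Prod.mk.injEq]; exact ⟨e1, e2⟩⟩
      exact orbital_eq_of_mem hmem
    rcases hcross with hsp | ⟨u₁, havoid⟩
    · apply hfinish
      intro w
      apply hinj
      have h3 : orbital A (ys (b w), xs (b w)) =
          orbital A (xs (b w), ys (b w)) := by
        rw [← swap_image_orbital A (xs (b w)) (ys (b w)), hsp]
      exact (hkey w).symm.trans h3
    · exfalso
      have hthis := hkey (b.symm u₁)
      rw [b.apply_symm_apply] at hthis
      exact havoid (β (b.symm u₁)) hthis.symm

end AuxKey
/-- Let `W` be finite of cardinality `n`, and let `A ∈ DGR` be such that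
either no permutation transposes the orbitals of `A`, or `A ∈ GR`, or `A = I₂`.
If `rank(A) ≥ n + 1`, or `rank(A) = n` and every orbital of `A` is self-paired,
then `A Wr B ∈ GR`. -/
theorem stmt17 {V W : Type} [Nontrivial V] [Nontrivial W] [Fintype W] (n : ℕ)
    (hn : Fintype.card W = n)
    (A : Subgroup (Equiv.Perm V)) (hA : IsDGR A)
    (hA' : (¬ ∃ α : Equiv.Perm V, TransposesOrbitals A α) ∨ IsGR A ∨ IsI2 A)
    (B : Subgroup (Equiv.Perm W))
    (hrank : (n : Cardinal) + 1 ≤ orbRank A ∨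
      (orbRank A = (n : Cardinal) ∧
        ∀ x : V × V, Prod.swap '' orbital A x = orbital A x)) :
    IsGR (prodWr A B) := by
  classical
  refine ⟨Set (Sym2 (W → V)), fun p => pairOrbit (prodWr A B) p, ?_⟩
  ext φ
  constructor
  · intro hφ
    apply key_membership n hn A hA hA' B hrank φ
    intro f g hfg
    have hcolor : pairOrbit (prodWr A B) s(φ f, φ g) =
        pairOrbit (prodWr A B) s(f, g) := hφ f g hfg
    have hmem : s(φ f, φ g) ∈ pairOrbit (prodWr A B) s(f, g) := by
      rw [← hcolor]
      exact pairOrbit_self _ _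
    obtain ⟨γ, hγ, hmap⟩ := hmem
    rw [Sym2.map_pair_eq] at hmap
    rcases Sym2.eq_iff.mp hmap with ⟨ha, hb⟩ | ⟨ha, hb⟩
    · exact ⟨γ, hγ, Or.inl ⟨ha, hb⟩⟩
    · exact ⟨γ, hγ, Or.inr ⟨ha, hb⟩⟩
  · intro hmem
    have key : ∀ f g : W → V, f ≠ g →
        pairOrbit (prodWr A B) s(φ f, φ g) = pairOrbit (prodWr A B) s(f, g) := by
      intro f g _
      apply pairOrbit_eq_of_mem
      exact ⟨φ, hmem, by rw [Sym2.map_pair_eq]⟩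
    exact key
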